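/- arXiv:2510.11298 — 4 statements merged into one kernel-verified Lean document; each statement's English description precedes it below -/
import Mathlib

section
/- Let f : Fin n → Fin k be a function with Young stabilizer S_f, let λ_j = |f⁻¹(j)|, fix a ∈ Fin n and i ∈ Fin k with λ_i ≥ 1. The value f(g(a)) depends only on the right coset S_f·g of g, and the number of right cosets [g] of S_f in Perm (Fin n) with f(g(a)) = i equals (n−1)! / ((λ_i − 1)! · ∏_{j ≠ i} (λ_j)!). -/
/-!
Since `S_f` acts freely on `Perm (Fin n)` by left multiplication and `g ↦ f (g a)` is constant
on its orbits, counting the permutations with `f (g a) = i` coset by coset gives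
`N · |S_f| = λ_i · (n-1)!`, where `N` is the number of cosets sought. With
`|S_f| = ∏_j λ_j! = λ_i · (λ_i - 1)! · ∏_{j ≠ i} λ_j!` the factor `λ_i ≥ 1` cancels.
-/

open Finset

/-- The Young stabilizer of a function `f : Fin n → Fin k`: the subgroup of permutations
`σ` of `Fin n` with `f ∘ σ = f`. -/
def youngStabilizer (n k : ℕ) (f : Fin n → Fin k) : Subgroup (Equiv.Perm (Fin n)) where
  carrier := {σ : Equiv.Perm (Fin n) | f ∘ ⇑σ = f}
  one_mem' := by
    funext i
    simp
  mul_mem' := by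
    intro σ τ hσ hτ
    funext i
    have h1 := congrFun hσ (τ i)
    have h2 := congrFun hτ i
    simp only [Function.comp_apply] at h1 h2 ⊢
    simp [Equiv.Perm.mul_apply, h1, h2]
  inv_mem' := by
    intro σ hσ
    funext i
    have h1 := congrFun hσ (σ⁻¹ i)
    simp only [Function.comp_apply, Equiv.Perm.coe_inv, Equiv.apply_symm_apply] at h1 ⊢
    exact h1.symm

open Nat

theorem Nat.card_subtype_comp_eq_mul {α β M : Type*} (π : α → β) (q : β → Prop)
    (e : ∀ y : Subtype q, {x // π x = y} ≃ M) :
    Nat.card {x // q (π x)} = Nat.card (Subtype q) * Nat.card M := by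
  rw [← Nat.card_prod, ← Nat.card_congr (Equiv.sigmaEquivProd _ _),
    ← Nat.card_congr (Equiv.sigmaCongrRight e),
    Nat.card_congr (Equiv.sigmaSubtypeFiberEquivSubtype π fun _ => Iff.rfl)]

namespace QuotientGroup

variable {G : Type*} [Group G] (H : Subgroup G)

noncomputable def rightRelFiberEquiv (c : Quotient (rightRel H)) :
    {g : G // Quotient.mk (rightRel H) g = c} ≃ H :=
  (Equiv.subtypeEquiv (Equiv.mulRight c.out⁻¹) fun g => by
    conv_lhs => rw [← c.out_eq]
    rw [Quotient.eq, rightRel_apply, ← H.inv_mem_iff]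
    simp)

theorem card_subtype_mk_rightRel (p : Quotient (rightRel H) → Prop) :
    Nat.card {g : G // p (Quotient.mk (rightRel H) g)} = Nat.card (Subtype p) * Nat.card H :=
  Nat.card_subtype_comp_eq_mul _ p fun c => rightRelFiberEquiv H c

end QuotientGroup

namespace Equiv.Perm

variable {α : Type*} [DecidableEq α]

def applyFiberEquivStabilizer (a b : α) : {g : Perm α // g a = b} ≃ {g : Perm α // g a = a} :=
  Equiv.subtypeEquiv (Equiv.mulLeft (swap a b)) fun g => by
    simp [Perm.mul_apply, swap_apply_eq_iff]

theorem card_subtype_apply_eq_self [Finite α] (a : α) :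
    Nat.card {g : Perm α // g a = a} = (Nat.card α - 1)! := by
  have hcard := Nat.card_subtype_comp_eq_mul (fun g : Perm α => g a) (fun _ => True)
    fun b => applyFiberEquivStabilizer a b.1
  simp only [Nat.card_congr (Equiv.subtypeUnivEquiv fun _ => trivial), Nat.card_perm] at hcard
  have hpos : Nat.card α ≠ 0 := Nat.card_ne_zero.mpr ⟨⟨a⟩, inferInstance⟩
  rw [← Nat.mul_factorial_pred hpos] at hcard
  exact (Nat.eq_of_mul_eq_mul_left (Nat.pos_of_ne_zero hpos) hcard).symm

theorem card_subtype_apply [Finite α] (a : α) (p : α → Prop) :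
    Nat.card {g : Perm α // p (g a)} = Nat.card (Subtype p) * (Nat.card α - 1)! := by
  rw [Nat.card_subtype_comp_eq_mul (fun g : Perm α => g a) p
    fun b => applyFiberEquivStabilizer a b.1, card_subtype_apply_eq_self]

end Equiv.Perm

section youngStabilizer

variable {n k : ℕ} (f : Fin n → Fin k)

theorem comp_eq_of_mk_rightRel_youngStabilizer {g g' : Equiv.Perm (Fin n)}
    (h : Quotient.mk (QuotientGroup.rightRel (youngStabilizer n k f)) g =
      Quotient.mk (QuotientGroup.rightRel (youngStabilizer n k f)) g') :
    f ∘ ⇑g = f ∘ ⇑g' := by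
  have hmem : f ∘ ⇑(g' * g⁻¹) = f := QuotientGroup.rightRel_apply.mp (Quotient.exact h)
  funext x
  simpa using (congrFun hmem (g x)).symm

theorem card_youngStabilizer :
    Nat.card (youngStabilizer n k f) = ∏ j, (#{x | f x = j})! := by
  change Nat.card {g : Equiv.Perm (Fin n) // f ∘ g = f} = _
  rw [Nat.card_eq_fintype_card, DomMulAct.stabilizer_card]
  simp only [Fintype.card_subtype]

end youngStabilizer

/-- The value `f (g a)` depends only on the right coset of `g` modulo the Young
stabilizer, and the number of right cosets `[g]` with `f (g a) = i` equals
`(n-1)! / ((λ_i - 1)! * ∏_{j ≠ i} (λ_j)!)` where `λ_j` is the cardinality of the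
fiber of `f` over `j`. -/
theorem stmt2 (n k : ℕ) (f : Fin n → Fin k) (a : Fin n) (i : Fin k)
    (hi : 1 ≤ (Finset.univ.filter fun x => f x = i).card) :
    (∀ g g' : Equiv.Perm (Fin n),
      Quotient.mk (QuotientGroup.rightRel (youngStabilizer n k f)) g =
        Quotient.mk (QuotientGroup.rightRel (youngStabilizer n k f)) g' →
      f (g a) = f (g' a)) ∧
    Nat.card {c : Quotient (QuotientGroup.rightRel (youngStabilizer n k f)) //
        ∃ g : Equiv.Perm (Fin n),
          Quotient.mk (QuotientGroup.rightRel (youngStabilizer n k f)) g = c ∧ f (g a) = i} =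
      Nat.factorial (n - 1) /
        (Nat.factorial ((Finset.univ.filter fun x => f x = i).card - 1) *
          ∏ j ∈ Finset.univ.erase i,
            Nat.factorial ((Finset.univ.filter fun x => f x = j).card)) := by
  have hwd (g g' : Equiv.Perm (Fin n))
      (h : Quotient.mk (QuotientGroup.rightRel (youngStabilizer n k f)) g = Quotient.mk _ g') :
      f (g a) = f (g' a) := congrFun (comp_eq_of_mk_rightRel_youngStabilizer f h) a
  refine ⟨hwd, ?_⟩
  have hcount := QuotientGroup.card_subtype_mk_rightRel (youngStabilizer n k f)
    fun c => ∃ g, Quotient.mk _ g = c ∧ f (g a) = i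
  have hperm : Nat.card {g : Equiv.Perm (Fin n) // f (g a) = i} = #{x | f x = i} * (n - 1)! := by
    simpa [Fintype.card_subtype] using Equiv.Perm.card_subtype_apply a (f · = i)
  rw [Nat.card_congr (Equiv.subtypeEquivRight fun g => ⟨fun ⟨g', hg', hi'⟩ => hwd g' g hg' ▸ hi',
      fun hi' => ⟨g, rfl, hi'⟩⟩), hperm, card_youngStabilizer,
    ← Finset.mul_prod_erase _ _ (Finset.mem_univ i),
    ← Nat.mul_factorial_pred (Nat.one_le_iff_ne_zero.mp hi)] at hcount
  refine (Nat.div_eq_of_eq_mul_left (by positivity) (Nat.eq_of_mul_eq_mul_left hi ?_)).symm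
  rw [hcount]
  ring
end

section
/- Let f : Fin n → Fin k be a function with Young stabilizer S_f, let λ_l = |f⁻¹(l)|, fix two distinct elements a, b ∈ Fin n and an index i ∈ Fin k with λ_i ≥ 2. Then the number of right cosets [g] of S_f in Perm (Fin n) with f(g(a)) = i and f(g(b)) = i equals (n−2)! / ((λ_i − 2)! · ∏_{l ≠ i} (λ_l)!). -/
/-! A right coset `S_f g` is determined by `f ∘ g`, and the functions of the form `f ∘ g` are
exactly those whose fibers have the sizes `λ_l`. Those taking the value `i` at `a` and `b`
correspond, by restriction to the complement of `{a, b}`, to the functions on an `(n - 2)`-element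
set whose fibers have the sizes `λ` with `λ_i` lowered by two. By orbit–stabilizer there are
`(n - 2)! / ((λ_i - 2)! ∏_{l ≠ i} λ_l!)` of them, the stabilizer being the product of the
symmetric groups of the fibers. -/

open Finset

open Equiv
open scoped Nat

section FiberCount

variable {α κ : Type*} [Fintype α] [DecidableEq κ]

theorem card_fiber_comp_perm (f : α → κ) (σ : Perm α) (l : κ) :
    #{x | f (σ x) = l} = #{x | f x = l} :=
  card_equiv σ (by simp)

theorem exists_perm_comp_eq_iff_card_fiber_eq {f h : α → κ} :
    (∃ σ : Perm α, f ∘ σ = h) ↔ ∀ l, #{x | h x = l} = #{x | f x = l} := by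
  constructor
  · rintro ⟨σ, rfl⟩ l
    exact card_fiber_comp_perm f σ l
  · intro hfib
    let e l : {x // h x = l} ≃ {x // f x = l} :=
      Fintype.equivOfCardEq (by simpa only [Fintype.card_subtype] using hfib l)
    exact ⟨ofFiberEquiv e, funext (ofFiberEquiv_map e)⟩

theorem exists_perm_forall_mem_comp_eq {f : α → κ} {t : Finset α} {i : κ}
    (ht : #t ≤ #{x | f x = i}) : ∃ σ : Perm α, ∀ x ∈ t, f (σ x) = i := by
  obtain ⟨u, hu, hut⟩ := exists_subset_card_eq ht
  obtain ⟨σ, hσ⟩ := Perm.exists_map_finset_eq t u hut.symm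
  refine ⟨σ, fun x hx => ?_⟩
  have hσx : σ x ∈ u := hσ ▸ mem_map_of_mem σ.toEmbedding hx
  simpa using hu hσx

variable [DecidableEq α]

theorem card_fiber_eq_card_fiber_compl_add {t : Finset α} {i : κ} {h : α → κ}
    (ht : ∀ x ∈ t, h x = i) (l : κ) :
    #{x | h x = l} = #{x : {x // x ∉ t} | h x = l} + if l = i then #t else 0 := by
  have hcompl : #{x : {x // x ∉ t} | h x = l} = #{x | h x = l ∧ x ∉ t} := by
    simp only [← Fintype.card_subtype, and_comm (a := h _ = l)]
    exact Fintype.card_congr (subtypeSubtypeEquivSubtypeInter (· ∉ t) (h · = l))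
  have hon : #{x | h x = l ∧ x ∈ t} = if l = i then #t else 0 := by
    split_ifs with hl
    · subst hl
      congr 1
      ext x
      simpa using ht x
    · rw [card_eq_zero, filter_eq_empty_iff]
      rintro x - ⟨rfl, hxt⟩
      exact hl (ht x hxt)
  rw [hcompl, ← hon, add_comm, ← filter_filter, ← filter_filter, card_filter_add_card_filter_not]

def constOnEquivCompl (t : Finset α) (i : κ) :
    {h : α → κ // ∀ x ∈ t, h x = i} ≃ ({x // x ∉ t} → κ) where
  toFun h x := h.1 x
  invFun h := ⟨fun x => if hx : x ∈ t then i else h ⟨x, hx⟩, fun _ hx => dif_pos hx⟩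
  left_inv h := Subtype.ext <| funext fun x => by by_cases hx : x ∈ t <;> simp [hx, h.2 x]
  right_inv h := funext fun x => dif_neg x.2

theorem card_orbit_constOn_eq_card_orbit_restrict {f : α → κ} {t : Finset α} {i : κ}
    (hf : ∀ x ∈ t, f x = i) :
    Nat.card {h : α → κ // (∃ σ : Perm α, f ∘ σ = h) ∧ ∀ x ∈ t, h x = i} =
      Nat.card {h : {x // x ∉ t} → κ // ∃ σ : Perm {x // x ∉ t}, (f ∘ (↑)) ∘ σ = h} := by
  refine Nat.card_congr <| (subtypeEquivRight fun _ => and_comm).trans <|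
    (subtypeSubtypeEquivSubtypeInter _ _).symm.trans <|
      subtypeEquiv (constOnEquivCompl t i) fun h => ?_
  simp only [exists_perm_comp_eq_iff_card_fiber_eq]
  refine forall_congr' fun l => ?_
  rw [card_fiber_eq_card_fiber_compl_add h.2 l, card_fiber_eq_card_fiber_compl_add hf l,
    add_left_inj]
  rfl

theorem card_orbit_mul_prod_factorial [Fintype κ] (f : α → κ) :
    Nat.card {h : α → κ // ∃ σ : Perm α, f ∘ σ = h} * ∏ l, (#{x | f x = l})! =
      (Fintype.card α)! := by
  have horbit : MulAction.orbit (Perm α)ᵈᵐᵃ f = {h | ∃ σ : Perm α, f ∘ σ = h} := by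
    ext h
    simp only [MulAction.mem_orbit_iff, DomMulAct.mk.surjective.exists]
    rfl
  have hstab : Nat.card (MulAction.stabilizer (Perm α)ᵈᵐᵃ f) = ∏ l, (#{x | f x = l})! := by
    rw [Nat.card_congr (subtypeEquiv (q := fun σ : Perm α => f ∘ σ = f) DomMulAct.mk.symm
      fun _ => DomMulAct.mem_stabilizer_iff), Nat.card_eq_fintype_card, DomMulAct.stabilizer_card]
    simp only [Fintype.card_subtype]
  rw [← hstab, ← Set.coe_ofPred, ← horbit, Nat.card_coe_set_eq, ← MulAction.index_stabilizer,
    Subgroup.index_mul_card, Nat.card_congr DomMulAct.mk.symm, Nat.card_perm,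
    Nat.card_eq_fintype_card]

theorem card_orbit_constOn_mul_prod_factorial [Fintype κ] (f : α → κ) {t : Finset α} {i : κ}
    (ht : #t ≤ #{x | f x = i}) :
    Nat.card {h : α → κ // (∃ σ : Perm α, f ∘ σ = h) ∧ ∀ x ∈ t, h x = i} *
      ((#{x | f x = i} - #t)! * ∏ l ∈ univ.erase i, (#{x | f x = l})!) =
      (Fintype.card α - #t)! := by
  obtain ⟨σ₀, hσ₀⟩ := exists_perm_forall_mem_comp_eq ht
  have hfib l : #{x : {x // x ∉ t} | f (σ₀ x) = l} + (if l = i then #t else 0) =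
      #{x | f x = l} := by
    rw [← card_fiber_comp_perm f σ₀, card_fiber_eq_card_fiber_compl_add hσ₀]
  have horbit h : (∃ σ : Perm α, f ∘ σ = h) ↔ ∃ σ : Perm α, (f ∘ σ₀) ∘ σ = h := by
    simp only [exists_perm_comp_eq_iff_card_fiber_eq, Function.comp_apply, card_fiber_comp_perm]
  have hcard : Fintype.card {x // x ∉ t} = Fintype.card α - #t := by
    rw [Fintype.card_subtype_compl, Fintype.card_coe]
  simp only [horbit]
  rw [card_orbit_constOn_eq_card_orbit_restrict (f := f ∘ σ₀) hσ₀, ← hcard,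
    ← card_orbit_mul_prod_factorial ((f ∘ σ₀) ∘ Subtype.val), ← mul_prod_erase univ _ (mem_univ i)]
  congr 2
  · rw [← hfib i, if_pos rfl, Nat.add_sub_cancel]
    rfl
  · refine prod_congr rfl fun l hl => ?_
    rw [← hfib l, if_neg (ne_of_mem_erase hl), Nat.add_zero]
    rfl

end FiberCount

theorem rightRel_youngStabilizer_iff {n k : ℕ} {f : Fin n → Fin k} {g g' : Perm (Fin n)} :
    QuotientGroup.rightRel (youngStabilizer n k f) g g' ↔ f ∘ g = f ∘ g' := by
  rw [QuotientGroup.rightRel_apply]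
  change f ∘ ⇑(g' * g⁻¹) = f ↔ _
  rw [Perm.coe_mul, ← Function.comp_assoc, Perm.coe_inv, comp_symm_eq, eq_comm]

theorem card_cosets_youngStabilizer_eq_card_orbit {n k : ℕ} (f : Fin n → Fin k)
    (P : (Fin n → Fin k) → Prop) :
    Nat.card {c : Quotient (QuotientGroup.rightRel (youngStabilizer n k f)) //
        ∃ g, Quotient.mk _ g = c ∧ P (f ∘ g)} =
      Nat.card {h // (∃ g : Perm (Fin n), f ∘ g = h) ∧ P h} := by
  let Φ : Quotient (QuotientGroup.rightRel (youngStabilizer n k f)) → (Fin n → Fin k) :=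
    Quotient.lift (f ∘ ·) fun _ _ => rightRel_youngStabilizer_iff.mp
  have hΦ : Function.Injective Φ := by
    rintro ⟨g⟩ ⟨g'⟩ h
    exact Quotient.sound (rightRel_youngStabilizer_iff.mpr h)
  have himage : Φ '' {c | ∃ g, Quotient.mk _ g = c ∧ P (f ∘ g)} =
      {h | (∃ g : Perm (Fin n), f ∘ g = h) ∧ P h} := by
    ext h
    constructor
    · rintro ⟨_, ⟨g, rfl, hg⟩, rfl⟩
      exact ⟨⟨g, rfl⟩, hg⟩
    · rintro ⟨⟨g, rfl⟩, hg⟩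
      exact ⟨_, ⟨g, rfl, hg⟩, rfl⟩
  rw [← Set.coe_ofPred, ← Set.coe_ofPred, ← himage, Nat.card_image_of_injective hΦ]

/-- For distinct `a, b` and an index `i` with fiber of cardinality at least 2, the number
of right cosets `[g]` of the Young stabilizer with `f (g a) = i` and `f (g b) = i` equals
`(n-2)! / ((λ_i - 2)! * ∏_{l ≠ i} (λ_l)!)`. -/
theorem stmt4 (n k : ℕ) (f : Fin n → Fin k) (a b : Fin n) (hab : a ≠ b) (i : Fin k)
    (hi : 2 ≤ (Finset.univ.filter fun x => f x = i).card) :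
    Nat.card {c : Quotient (QuotientGroup.rightRel (youngStabilizer n k f)) //
        ∃ g : Equiv.Perm (Fin n),
          Quotient.mk (QuotientGroup.rightRel (youngStabilizer n k f)) g = c ∧
            f (g a) = i ∧ f (g b) = i} =
      Nat.factorial (n - 2) /
        (Nat.factorial ((Finset.univ.filter fun x => f x = i).card - 2) *
          ∏ l ∈ Finset.univ.erase i,
            Nat.factorial ((Finset.univ.filter fun x => f x = l).card)) := by
  have hpair : #{a, b} = 2 := card_pair hab
  have hcount := card_orbit_constOn_mul_prod_factorial f (t := {a, b}) (i := i) (hpair ▸ hi)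
  simp only [hpair, Fintype.card_fin, mem_insert, mem_singleton, forall_eq_or_imp,
    forall_eq] at hcount
  have hcosets := card_cosets_youngStabilizer_eq_card_orbit f fun h => h a = i ∧ h b = i
  simp only [Function.comp_apply] at hcosets
  rw [hcosets]
  exact (Nat.div_eq_of_eq_mul_left (by positivity) hcount.symm).symm
end

section
/- Let S be a type, n a natural number, and x : Fin n → S a function whose image has cardinality at least n − 1 (i.e., at most two of the values x(1),…,x(n) coincide). If σ ∈ Equiv.Perm (Fin n) satisfies x ∘ σ = x and σ ≠ 1, then there exist distinct indices a, b ∈ Fin n with x(a) = x(b) and σ = Equiv.swap a b. -/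
/-- If at most two of the values of `x : Fin n → S` coincide (the image has cardinality
at least `n - 1`), then any nontrivial permutation `σ` with `x ∘ σ = x` is the
transposition of two indices with equal values. -/
theorem stmt9 {S : Type*} {n : ℕ} (x : Fin n → S)
    (hx : n - 1 ≤ (Set.range x).ncard)
    (σ : Equiv.Perm (Fin n)) (hσ : x ∘ ⇑σ = x) (hσ1 : σ ≠ 1) :
    ∃ a b : Fin n, a ≠ b ∧ x a = x b ∧ σ = Equiv.swap a b := by
  obtain ⟨a, ha⟩ : ∃ a, σ a ≠ a := by
    by_contra h
    push_neg at h
    exact hσ1 (Equiv.ext h)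
  set b := σ a with hb
  have hxab : x b = x a := congrFun hσ a
  have hne : a ≠ b := fun h => ha h.symm
  have hrange : Set.range x = x '' {b}ᶜ := by
    ext y
    constructor
    · rintro ⟨i, rfl⟩
      by_cases hi : i = b
      · exact ⟨a, Set.mem_compl_singleton_iff.mpr hne, by rw [hi, hxab]⟩
      · exact ⟨i, hi, rfl⟩
    · rintro ⟨i, _, rfl⟩; exact ⟨i, rfl⟩
  have hcard : ({b}ᶜ : Set (Fin n)).ncard = n - 1 := by
    simp [Set.ncard_eq_toFinset_card', Set.toFinset_compl, Finset.card_compl]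
  have hinj : Set.InjOn x {b}ᶜ := by
    refine Set.injOn_of_ncard_image_eq ?_ (Set.toFinite _)
    have h1 : (x '' ({b}ᶜ : Set (Fin n))).ncard ≤ ({b}ᶜ : Set (Fin n)).ncard :=
      Set.ncard_image_le (Set.toFinite _)
    have h2 : n - 1 ≤ (x '' ({b}ᶜ : Set (Fin n))).ncard := by rw [← hrange]; exact hx
    omega
  have key : ∀ i, i ≠ a → i ≠ b → σ i = i := by
    intro i hia hib
    by_contra hi
    have hxi : x (σ i) = x i := congrFun hσ i
    have hσib : σ i ≠ b := by
      intro h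
      exact hia (σ.injective (h.trans hb))
    exact hi (hinj (Set.mem_compl_singleton_iff.mpr hσib) (Set.mem_compl_singleton_iff.mpr hib) hxi)
  have hσb : σ b = a := by
    by_cases h1 : σ b = b
    · exact absurd (σ.injective (hb.symm.trans h1.symm)) hne
    · by_cases h2 : σ b = a
      · exact h2
      · have hxb : x (σ b) = x b := congrFun hσ b
        exact absurd (hinj (Set.mem_compl_singleton_iff.mpr h1) (Set.mem_compl_singleton_iff.mpr hne) (hxb.trans hxab)) h2
  refine ⟨a, b, hne, hxab.symm, Equiv.ext fun i => ?_⟩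
  by_cases hia : i = a
  · simp [hia, ← hb]
  · by_cases hib : i = b
    · simp [hib, hσb, Equiv.swap_apply_right]
    · simp [key i hia hib, Equiv.swap_apply_of_ne_of_ne hia hib]
end

section
/- Let S be a type, n a natural number, and x : Fin n → S a function whose image has cardinality at least n − 1 (i.e., at most two of the values x(1),…,x(n) coincide). If σ ∈ Equiv.Perm (Fin n) is an even permutation (σ lies in the alternating subgroup, equivalently sign σ = 1) with σ ≠ 1, then x ∘ σ ≠ x. -/
/-!
If `x ∘ σ = x`, then `x` takes equal values at `i` and `σ i` for every `i`. A nontrivial even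
permutation is not a transposition, so it moves at least three points; hence we find two
distinct points whose values are already attained elsewhere, and deleting them from the domain
does not shrink the range. The range then has at most `n - 2` elements.
-/

open Equiv Finset

lemma Set.ncard_range_le_card_sub_two {α S : Type*} [Finite α] (x : α → S) {a b c d : α}
    (hbd : b ≠ d) (hab : a ≠ b) (had : a ≠ d) (hcb : c ≠ b) (hcd : c ≠ d)
    (hxab : x a = x b) (hxcd : x c = x d) : (Set.range x).ncard ≤ Nat.card α - 2 := by
  have hrange : Set.range x ⊆ x '' ({b, d}ᶜ : Set α) := by
    rintro _ ⟨w, rfl⟩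
    by_cases hwb : w = b
    · exact ⟨a, by simp [hab, had], by rw [hxab, hwb]⟩
    by_cases hwd : w = d
    · exact ⟨c, by simp [hcb, hcd], by rw [hxcd, hwd]⟩
    · exact ⟨w, by simp [hwb, hwd], rfl⟩
  calc (Set.range x).ncard ≤ (x '' ({b, d}ᶜ : Set α)).ncard := Set.ncard_le_ncard hrange
    _ ≤ ({b, d}ᶜ : Set α).ncard := Set.ncard_image_le
    _ = Nat.card α - 2 := by rw [Set.ncard_compl, Set.ncard_pair hbd]

namespace Equiv.Perm

variable {α : Type*} [Fintype α] [DecidableEq α]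

lemma three_le_card_support_of_mem_alternatingGroup {σ : Perm α}
    (hσ : σ ∈ alternatingGroup α) (hσ1 : σ ≠ 1) : 3 ≤ #σ.support := by
  have hswap : ¬ σ.IsSwap := fun h ↦ by
    have hsign := mem_alternatingGroup.mp hσ
    rw [h.sign_eq] at hsign
    exact absurd hsign (by decide)
  have := two_le_card_support_of_ne_one hσ1
  have := mt card_support_eq_two.mp hswap
  omega

lemma ncard_range_le_of_comp_eq {S : Type*} (x : α → S) {σ : Perm α}
    (hσ : 3 ≤ #σ.support) (hx : x ∘ σ = x) :
    (Set.range x).ncard ≤ Fintype.card α - 2 := by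
  have hxσ : ∀ w, x (σ w) = x w := congrFun hx
  rw [← Nat.card_eq_fintype_card]
  obtain ⟨i, hi⟩ := card_pos.mp (by omega : 0 < #σ.support)
  have hσi : σ i ≠ i := mem_support.mp hi
  by_cases hσσi : σ (σ i) = i
  · -- `σ` swaps `i` and `σ i`, so a third moved point `k` exists
    obtain ⟨k, hk, hki⟩ := exists_mem_notMem_of_card_lt_card
      (lt_of_le_of_lt card_le_two hσ : #({i, σ i} : Finset α) < #σ.support)
    simp only [mem_insert, mem_singleton, not_or] at hki
    have hσk : σ k ≠ i := fun h ↦ hki.2 (σ.injective (h.trans hσσi.symm))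
    exact Set.ncard_range_le_card_sub_two x (Ne.symm hki.1) hσi (fun h ↦ hki.2 h.symm) hσk
      (mem_support.mp hk) (hxσ i) (hxσ k)
  · have hσσ : σ (σ i) ≠ σ i := fun h ↦ hσi (σ.injective h)
    exact Set.ncard_range_le_card_sub_two x (Ne.symm hσσi) hσi (Ne.symm hσσ) hσi (Ne.symm hσσ)
      (hxσ i) (hxσ (σ i)).symm

end Equiv.Perm

/-- If at most two of the values of `x : Fin n → S` coincide (the image has cardinality
at least `n - 1`), then no nontrivial even permutation fixes `x`: the alternating group
acts freely on such tuples. -/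
theorem stmt10 {S : Type*} {n : ℕ} (x : Fin n → S)
    (hx : n - 1 ≤ (Set.range x).ncard)
    (σ : Equiv.Perm (Fin n)) (hσ : σ ∈ alternatingGroup (Fin n)) (hσ1 : σ ≠ 1) :
    x ∘ ⇑σ ≠ x := by
  intro hfix
  have hsupp := Perm.three_le_card_support_of_mem_alternatingGroup hσ hσ1
  have hn : 3 ≤ n := by simpa using hsupp.trans (card_le_univ σ.support)
  have hrange := Perm.ncard_range_le_of_comp_eq x hsupp hfix
  rw [Fintype.card_fin] at hrange
  omega
end
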